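/- arXiv:1801.03913 — 7 statements merged into one kernel-verified Lean document; each statement's English description precedes it below -/
import Mathlib

section
/- The triple ratio is a cross ratio of four lines through a vertex: let ((v₀,η₀), (v₁,η₁), (v₂,η₂)) be a triple of flags in general position, let u ∈ ℝ³ be a nonzero vector with η₁(u) = η₂(u) = 0, and let f₁, f, f₂ be nonzero linear functionals vanishing at v₀ with f₁(v₁) = 0, f(u) = 0, f₂(v₂) = 0 (i.e., the lines V₀V₁, V₀(η₁∩η₂), V₀V₂). Then the cross ratio cross(η₀, f₁, f, f₂), computed in the 2-dimensional subspace of (ℝ³)* of functionals vanishing at v₀, equals the triple ratio 𝕋((v₀,η₀),(v₁,η₁),(v₂,η₂)). -/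
/-!
The functionals vanishing at `v₀` are determined by their values at `v₁` and `v₂`, so the
alternating form `(P, Q) ↦ P(v₁) Q(v₂) - P(v₂) Q(v₁)` is nonzero on the pencil at `V₀`, hence a
nonzero multiple of every coordinate determinant there, and it computes the same cross ratio.
Since `f₁(v₁) = f₂(v₂) = 0`, each of its four values is a single product and the cross ratio is
`-η₀(v₁) f(v₂) / (η₀(v₂) f(v₁))`. Writing `u` in the basis `v₀, v₁, v₂`, the equations
`η₁(u) = η₂(u) = f(u) = 0` give `f(v₂) / f(v₁) = -η₂(v₀) η₁(v₂) / (η₁(v₀) η₂(v₁))`, which turns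
this into the triple ratio.
-/

/-- The triple ratio of three flags `(vᵢ, ηᵢ)` of `ℝP²`. -/
noncomputable def tripleRatio (v₀ v₁ v₂ : Fin 3 → ℝ)
    (η₀ η₁ η₂ : (Fin 3 → ℝ) →ₗ[ℝ] ℝ) : ℝ :=
  (η₀ v₁ * η₁ v₂ * η₂ v₀) / (η₀ v₂ * η₁ v₀ * η₂ v₁)

/-- The `2×2` determinant of the coordinate vectors of `P` and `Q` with respect to
a basis `b` of a (2-dimensional) real module. -/
noncomputable def det2 {M : Type*} [AddCommGroup M] [Module ℝ M]
    (b : Module.Basis (Fin 2) ℝ M) (P Q : M) : ℝ :=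
  b.repr P 0 * b.repr Q 1 - b.repr P 1 * b.repr Q 0

/-- The cross ratio of four vectors of a (2-dimensional) real module, computed with
respect to a basis `b`. -/
noncomputable def crossRatioIn {M : Type*} [AddCommGroup M] [Module ℝ M]
    (b : Module.Basis (Fin 2) ℝ M) (P₀ P₁ P₂ P₃ : M) : ℝ :=
  (det2 b P₀ P₁ * det2 b P₂ P₃) / (det2 b P₀ P₃ * det2 b P₁ P₂)

/-- The submodule of linear functionals on `ℝ³` vanishing at a given vector `v`,
i.e. the pencil of lines of `ℝP²` through the point `[v]`. -/
noncomputable def annAt (v : Fin 3 → ℝ) : Submodule ℝ ((Fin 3 → ℝ) →ₗ[ℝ] ℝ) where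
  carrier := {f | f v = 0}
  add_mem' := by
    intro f g hf hg
    simp only [Set.mem_setOf_eq, LinearMap.add_apply] at *
    rw [hf, hg, add_zero]
  zero_mem' := by simp
  smul_mem' := by
    intro c f hf
    simp only [Set.mem_setOf_eq, LinearMap.smul_apply] at *
    rw [hf, smul_zero]

open Module Submodule

theorem LinearMap.BilinForm.IsAlt.restrict {R M : Type*} [CommSemiring R] [AddCommMonoid M]
    [Module R M] {D : LinearMap.BilinForm R M} (hD : D.IsAlt) (W : Submodule R M) :
    (D.restrict W).IsAlt :=
  fun x ↦ hD x

section CrossRatio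

variable {M : Type*} [AddCommGroup M] [Module ℝ M]

theorem LinearMap.BilinForm.IsAlt.apply_eq_mul_det2 {D : LinearMap.BilinForm ℝ M} (hD : D.IsAlt)
    (b : Basis (Fin 2) ℝ M) (P Q : M) : D P Q = D (b 0) (b 1) * det2 b P Q := by
  conv_lhs => rw [← b.sum_repr P, ← b.sum_repr Q]
  simp only [Fin.sum_univ_two, map_add, map_smul, LinearMap.add_apply, LinearMap.smul_apply,
    smul_eq_mul, hD.self_eq_zero, ← hD.neg_eq (b 0) (b 1), det2]
  ring

theorem LinearMap.BilinForm.IsAlt.crossRatioIn_eq {D : LinearMap.BilinForm ℝ M} (hD : D.IsAlt)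
    (hD0 : D ≠ 0) (b : Basis (Fin 2) ℝ M) (P₀ P₁ P₂ P₃ : M) :
    crossRatioIn b P₀ P₁ P₂ P₃ = (D P₀ P₁ * D P₂ P₃) / (D P₀ P₃ * D P₁ P₂) := by
  have hk : D (b 0) (b 1) ≠ 0 := fun hk ↦ hD0 <| by
    ext P Q
    rw [hD.apply_eq_mul_det2 b, hk, zero_mul, LinearMap.zero_apply, LinearMap.zero_apply]
  rw [crossRatioIn, hD.apply_eq_mul_det2 b P₀, hD.apply_eq_mul_det2 b P₂, hD.apply_eq_mul_det2 b P₀,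
    hD.apply_eq_mul_det2 b P₁, mul_mul_mul_comm _ (det2 b P₀ P₁), mul_mul_mul_comm _ (det2 b P₀ P₃),
    mul_div_mul_left _ _ (mul_ne_zero hk hk)]

end CrossRatio

section EvalWedge

variable {R V : Type*} [CommRing R] [AddCommGroup V] [Module R V]

def evalWedge (v₁ v₂ : V) : LinearMap.BilinForm R (V →ₗ[R] R) :=
  LinearMap.mk₂ R (fun f g ↦ f v₁ * g v₂ - f v₂ * g v₁)
    (fun _ _ _ ↦ by simp only [LinearMap.add_apply]; ring)
    (fun _ _ _ ↦ by simp only [LinearMap.smul_apply, smul_eq_mul]; ring)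
    (fun _ _ _ ↦ by simp only [LinearMap.add_apply]; ring)
    (fun _ _ _ ↦ by simp only [LinearMap.smul_apply, smul_eq_mul]; ring)

@[simp]
theorem evalWedge_apply (v₁ v₂ : V) (f g : V →ₗ[R] R) :
    evalWedge v₁ v₂ f g = f v₁ * g v₂ - f v₂ * g v₁ := rfl

theorem evalWedge_isAlt (v₁ v₂ : V) : (evalWedge (R := R) v₁ v₂).IsAlt := fun f ↦ by
  rw [evalWedge_apply, mul_comm, sub_self]

end EvalWedge

section Relation

variable {K V : Type*} [Field K] [AddCommGroup V] [Module K V]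

theorem mul_apply_add_mul_apply_eq_zero {v₀ v₁ v₂ u : V} {η₁ η₂ f : V →ₗ[K] K}
    (hu : u ∈ span K {v₀, v₁, v₂}) (hu0 : u ≠ 0) (h₁ : η₁ v₁ = 0) (h₂ : η₂ v₂ = 0)
    (h12 : η₁ v₂ ≠ 0) (h21 : η₂ v₁ ≠ 0) (hu1 : η₁ u = 0) (hu2 : η₂ u = 0)
    (hf0 : f v₀ = 0) (hfu : f u = 0) :
    η₂ v₀ * η₁ v₂ * f v₁ + η₁ v₀ * η₂ v₁ * f v₂ = 0 := by
  obtain ⟨a, b, c, rfl⟩ := mem_span_triple.mp hu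
  simp only [map_add, map_smul, smul_eq_mul, h₁, h₂, hf0, mul_zero, add_zero, zero_add]
    at hu1 hu2 hfu
  have ha : a ≠ 0 := by
    rintro rfl
    obtain rfl : c = 0 := by simpa [h12] using hu1
    obtain rfl : b = 0 := by simpa [h21] using hu2
    simp at hu0
  refine (mul_eq_zero.mp ?_).resolve_left ha
  linear_combination (η₂ v₁ * f v₂) * hu1 + (η₁ v₂ * f v₁) * hu2 - (η₂ v₁ * η₁ v₂) * hfu

end Relation

theorem crossRatio_of_lines_eq_tripleRatio_general
    (v₀ v₁ v₂ : Fin 3 → ℝ) (η₀ η₁ η₂ : (Fin 3 → ℝ) →ₗ[ℝ] ℝ)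
    (h₀ : η₀ v₀ = 0) (h₁ : η₁ v₁ = 0) (h₂ : η₂ v₂ = 0)
    (hv : LinearIndependent ℝ ![v₀, v₁, v₂])
    (h01 : η₀ v₁ ≠ 0) (h02 : η₀ v₂ ≠ 0) (h10 : η₁ v₀ ≠ 0)
    (h12 : η₁ v₂ ≠ 0) (h21 : η₂ v₁ ≠ 0)
    -- the point `η₁ ∩ η₂`
    (u : Fin 3 → ℝ) (hu : u ≠ 0) (hu1 : η₁ u = 0) (hu2 : η₂ u = 0)
    -- the lines `V₀V₁`, `V₀(η₁∩η₂)`, `V₀V₂`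
    (f₁ f f₂ : (Fin 3 → ℝ) →ₗ[ℝ] ℝ)
    (hf₁ : f₁ ≠ 0) (hf : f ≠ 0) (hf₂ : f₂ ≠ 0)
    (hf₁0 : f₁ v₀ = 0) (hf0 : f v₀ = 0) (hf₂0 : f₂ v₀ = 0)
    (hf₁1 : f₁ v₁ = 0) (hfu : f u = 0) (hf₂2 : f₂ v₂ = 0)
    (b : Module.Basis (Fin 2) ℝ (annAt v₀)) :
    crossRatioIn (M := annAt v₀) b ⟨η₀, h₀⟩ ⟨f₁, hf₁0⟩ ⟨f, hf0⟩ ⟨f₂, hf₂0⟩ =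
      tripleRatio v₀ v₁ v₂ η₀ η₁ η₂ := by
  have hspan : span ℝ {v₀, v₁, v₂} = ⊤ := by
    have := hv.span_eq_top_of_card_eq_finrank' (by simp)
    rwa [Matrix.range_cons, Matrix.range_cons, Matrix.range_cons_empty, Set.singleton_union,
      Set.singleton_union] at this
  have hvanish : ∀ g : (Fin 3 → ℝ) →ₗ[ℝ] ℝ, g v₀ = 0 → g v₁ = 0 → g v₂ = 0 → g = 0 :=
    fun g g0 g1 g2 ↦ LinearMap.ext_on hspan (by simp [Set.EqOn, g0, g1, g2])
  have hK := mul_apply_add_mul_apply_eq_zero (hspan ▸ mem_top) hu h₁ h₂ h12 h21 hu1 hu2 hf0 hfu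
  have hfv₁ : f v₁ ≠ 0 := fun h ↦ hf <| hvanish f hf0 h <| by
    simpa [h, h10, h21] using hK
  have hf₁2 : f₁ v₂ ≠ 0 := fun h ↦ hf₁ (hvanish f₁ hf₁0 hf₁1 h)
  have hf₂1 : f₂ v₁ ≠ 0 := fun h ↦ hf₂ (hvanish f₂ hf₂0 h hf₂2)
  have hD0 : (evalWedge v₁ v₂).restrict (annAt v₀) ≠ 0 := fun h ↦ by
    simpa [hf₁1, hf₂2, hf₁2, hf₂1] using
      LinearMap.congr_fun₂ h ⟨f₁, hf₁0⟩ ⟨f₂, hf₂0⟩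
  rw [((evalWedge_isAlt v₁ v₂).restrict (annAt v₀)).crossRatioIn_eq (M := annAt v₀) hD0 b,
    tripleRatio]
  simp only [LinearMap.BilinForm.restrict_apply, LinearMap.domRestrict_apply, evalWedge_apply,
    hf₁1, hf₂2, mul_zero, zero_mul, sub_zero, zero_sub]
  field_simp
  linear_combination -hK

/-- The triple ratio of a triple of flags in general position is the cross ratio of
the four lines `η₀`, `V₀V₁`, `V₀(η₁∩η₂)`, `V₀V₂` through the vertex `V₀`. -/
theorem crossRatio_of_lines_eq_tripleRatio
    (v₀ v₁ v₂ : Fin 3 → ℝ) (η₀ η₁ η₂ : (Fin 3 → ℝ) →ₗ[ℝ] ℝ)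
    (hv₀ : v₀ ≠ 0) (hv₁ : v₁ ≠ 0) (hv₂ : v₂ ≠ 0)
    (hη₀ : η₀ ≠ 0) (hη₁ : η₁ ≠ 0) (hη₂ : η₂ ≠ 0)
    (h₀ : η₀ v₀ = 0) (h₁ : η₁ v₁ = 0) (h₂ : η₂ v₂ = 0)
    (hv : LinearIndependent ℝ ![v₀, v₁, v₂])
    (hη : LinearIndependent ℝ ![η₀, η₁, η₂])
    (h01 : η₀ v₁ ≠ 0) (h02 : η₀ v₂ ≠ 0) (h10 : η₁ v₀ ≠ 0)
    (h12 : η₁ v₂ ≠ 0) (h20 : η₂ v₀ ≠ 0) (h21 : η₂ v₁ ≠ 0)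
    -- the point `η₁ ∩ η₂`
    (u : Fin 3 → ℝ) (hu : u ≠ 0) (hu1 : η₁ u = 0) (hu2 : η₂ u = 0)
    -- the lines `V₀V₁`, `V₀(η₁∩η₂)`, `V₀V₂`
    (f₁ f f₂ : (Fin 3 → ℝ) →ₗ[ℝ] ℝ)
    (hf₁ : f₁ ≠ 0) (hf : f ≠ 0) (hf₂ : f₂ ≠ 0)
    (hf₁0 : f₁ v₀ = 0) (hf0 : f v₀ = 0) (hf₂0 : f₂ v₀ = 0)
    (hf₁1 : f₁ v₁ = 0) (hfu : f u = 0) (hf₂2 : f₂ v₂ = 0)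
    (b : Module.Basis (Fin 2) ℝ (annAt v₀)) :
    crossRatioIn (M := annAt v₀) b ⟨η₀, h₀⟩ ⟨f₁, hf₁0⟩ ⟨f, hf0⟩ ⟨f₂, hf₂0⟩ =
      tripleRatio v₀ v₁ v₂ η₀ η₁ η₂ :=
  crossRatio_of_lines_eq_tripleRatio_general v₀ v₁ v₂ η₀ η₁ η₂ h₀ h₁ h₂ hv h01 h02 h10 h12 h21 u hu
    hu1 hu2 f₁ f f₂ hf₁ hf hf₂ hf₁0 hf0 hf₂0 hf₁1 hfu hf₂2 b
end

section
/- The quadruple ratio as a cross ratio equals a triple ratio of derived flags: let ((v₀,η₀), (v₁,η₁), (v₂,η₂), (v₃,η₃)) be an ordered quadruple of flags in general position, and for i ≠ j let ℓ_{ij} be a nonzero linear functional on ℝ³ vanishing on v_i and v_j. Then the cross ratio cross(η₀, ℓ₀₃, ℓ₀₂, ℓ₀₁), computed in the 2-dimensional subspace of (ℝ³)* of functionals vanishing at v₀, equals the triple ratio 𝕋((v₀,η₀), (v₃,ℓ₂₃), (v₁,ℓ₁₂)). -/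
/-- An ordered quadruple of flags `(v i, η i)` is in general position: any three of
the vectors are linearly independent, any three of the functionals are linearly
independent, `η i (v i) = 0` and `η i (v j) ≠ 0` for `i ≠ j`. -/
def IsGenPosQuad (v : Fin 4 → Fin 3 → ℝ) (η : Fin 4 → (Fin 3 → ℝ) →ₗ[ℝ] ℝ) : Prop :=
  (∀ i, v i ≠ 0) ∧ (∀ i, η i ≠ 0) ∧ (∀ i, η i (v i) = 0) ∧
  (∀ i j k : Fin 4, i ≠ j → i ≠ k → j ≠ k → LinearIndependent ℝ ![v i, v j, v k]) ∧
  (∀ i j k : Fin 4, i ≠ j → i ≠ k → j ≠ k → LinearIndependent ℝ ![η i, η j, η k]) ∧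
  (∀ i j, i ≠ j → η i (v j) ≠ 0)

open Module Matrix

theorem det2_eq_basis_det {M : Type*} [AddCommGroup M] [Module ℝ M]
    (b : Basis (Fin 2) ℝ M) (P Q : M) : det2 b P Q = b.det ![P, Q] := by
  rw [Basis.det_apply, det_fin_two, det2]
  simp only [Basis.toMatrix_apply, cons_val_zero, cons_val_one]
  ring

theorem AlternatingMap.apply_eq_det2_mul {M : Type*} [AddCommGroup M] [Module ℝ M]
    (b : Basis (Fin 2) ℝ M) (ω : M [⋀^Fin 2]→ₗ[ℝ] ℝ) (P Q : M) :
    ω ![P, Q] = det2 b P Q * ω b := by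
  conv_lhs => rw [ω.eq_smul_basis_det b]
  rw [AlternatingMap.smul_apply, smul_eq_mul, det2_eq_basis_det, mul_comm]

theorem crossRatioIn_eq_of_alternatingMap {M : Type*} [AddCommGroup M] [Module ℝ M]
    (b : Basis (Fin 2) ℝ M) (ω : M [⋀^Fin 2]→ₗ[ℝ] ℝ) (hω : ω b ≠ 0) (P₀ P₁ P₂ P₃ : M) :
    crossRatioIn b P₀ P₁ P₂ P₃ =
      (ω ![P₀, P₁] * ω ![P₂, P₃]) / (ω ![P₀, P₃] * ω ![P₁, P₂]) := by
  simp only [ω.apply_eq_det2_mul b, crossRatioIn]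
  rw [mul_mul_mul_comm, mul_mul_mul_comm _ (ω b), mul_div_mul_right _ _ (mul_ne_zero hω hω)]

section Dual

variable {K V : Type*} [Field K] [AddCommGroup V] [Module K V]

noncomputable def Submodule.evalDet (S : Submodule K (Dual K V)) (x y : V) :
    S [⋀^Fin 2]→ₗ[K] K :=
  detRowAlternating.compLinearMap ((LinearMap.pi fun i => Dual.eval K V (![x, y] i)) ∘ₗ S.subtype)

theorem Submodule.evalDet_apply (S : Submodule K (Dual K V)) (x y : V) (P Q : S) :
    S.evalDet x y ![P, Q] =
      (P : Dual K V) x * (Q : Dual K V) y - (P : Dual K V) y * (Q : Dual K V) x := by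
  change det (of fun i j => ((![P, Q] i : S) : Dual K V) (![x, y] j)) = _
  simp [det_fin_two]

theorem Module.Dual.apply_ne_zero_of_linearIndependent (hV : finrank K V = 3) {a b c : V}
    (h : LinearIndependent K ![a, b, c]) {f : Dual K V} (hf : f ≠ 0) (ha : f a = 0)
    (hb : f b = 0) : f c ≠ 0 := by
  intro hc
  let B := basisOfLinearIndependentOfCardEqFinrank h (by simp [hV])
  exact hf (B.ext fun i => by fin_cases i <;> simp [B, ha, hb, hc])

theorem Module.Dual.det_apply_eq_zero_of_common_zero [FiniteDimensional K V] {ι : Type*}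
    [Fintype ι] [DecidableEq ι] (hι : Fintype.card ι = finrank K V) (f : ι → Dual K V)
    (x : ι → V) {w : V} (hw : w ≠ 0) (hf : ∀ i, f i w = 0) :
    (of fun i j => f i (x j)).det = 0 := by
  have hmulVec (c : ι → K) :
      (of fun i j => f i (x j)) *ᵥ c = fun i => f i (∑ j, c j • x j) := by
    ext i; simp [mulVec, dotProduct, mul_comm]
  rw [← exists_mulVec_eq_zero_iff]
  by_cases hx : LinearIndependent K x
  · have hw_span : w ∈ Submodule.span K (Set.range x) := by
      rw [hx.span_eq_top_of_card_eq_finrank' hι]; trivial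
    obtain ⟨c, rfl⟩ := (Submodule.mem_span_range_iff_exists_fun K).1 hw_span
    refine ⟨c, ?_, by rw [hmulVec]; exact funext hf⟩
    rintro rfl
    simp at hw
  · obtain ⟨c, hc, i, hi⟩ := Fintype.not_linearIndependent_iff.1 hx
    exact ⟨c, fun h => hi (congrFun h i), by rw [hmulVec, hc]; simp only [map_zero]; rfl⟩

theorem Module.Dual.cyclic_products_add_eq_zero_of_common_zero [FiniteDimensional K V]
    (hV : finrank K V = 3) {f₀ f₁ f₂ : Dual K V} {x₀ x₁ x₂ w : V} (hw : w ≠ 0)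
    (h₀ : f₀ w = 0) (h₁ : f₁ w = 0) (h₂ : f₂ w = 0)
    (h₀₀ : f₀ x₀ = 0) (h₁₁ : f₁ x₁ = 0) (h₂₂ : f₂ x₂ = 0) :
    f₀ x₁ * f₁ x₂ * f₂ x₀ + f₀ x₂ * f₁ x₀ * f₂ x₁ = 0 := by
  have hdet := det_apply_eq_zero_of_common_zero (by simp [hV]) ![f₀, f₁, f₂] ![x₀, x₁, x₂] hw
    (by simp [Fin.forall_fin_succ, h₀, h₁, h₂])
  rw [det_fin_three] at hdet
  simp only [of_apply, cons_val, h₀₀, h₁₁, h₂₂] at hdet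
  linear_combination hdet

end Dual

/-- The quadruple ratio, as the cross ratio `cross(η₀, ℓ₀₃, ℓ₀₂, ℓ₀₁)` of four lines
through `v₀`, equals the triple ratio `𝕋((v₀,η₀), (v₃,ℓ₂₃), (v₁,ℓ₁₂))` of the derived
flags.  Here, for `i ≠ j`, `L i j` is a (any) nonzero functional vanishing on
`v i` and `v j`, representing the line through the two points. -/
theorem quadrupleRatio_crossRatio_eq_tripleRatio
    (v : Fin 4 → Fin 3 → ℝ) (η : Fin 4 → (Fin 3 → ℝ) →ₗ[ℝ] ℝ)
    (hgen : IsGenPosQuad v η)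
    (L : Fin 4 → Fin 4 → (Fin 3 → ℝ) →ₗ[ℝ] ℝ)
    (hL : ∀ i j, i ≠ j → L i j ≠ 0 ∧ L i j (v i) = 0 ∧ L i j (v j) = 0)
    (b : Module.Basis (Fin 2) ℝ (annAt (v 0))) :
    crossRatioIn (M := annAt (v 0)) b ⟨η 0, hgen.2.2.1 0⟩ ⟨L 0 3, (hL 0 3 (by decide)).2.1⟩
      ⟨L 0 2, (hL 0 2 (by decide)).2.1⟩ ⟨L 0 1, (hL 0 1 (by decide)).2.1⟩ =
      tripleRatio (v 0) (v 3) (v 1) (η 0) (L 2 3) (L 1 2) := by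
  obtain ⟨hv, -, hηv, hv_indep, -, hηv_ne⟩ := hgen
  have hL_ne (i j k : Fin 4) (h : i ≠ j ∧ i ≠ k ∧ j ≠ k) : L i j (v k) ≠ 0 :=
    Dual.apply_ne_zero_of_linearIndependent (finrank_fin_fun ℝ)
      (hv_indep i j k h.1 h.2.1 h.2.2) (hL i j h.1).1 (hL i j h.1).2.1 (hL i j h.1).2.2
  set ω := (annAt (v 0)).evalDet (v 1) (v 3)
  have hωb : ω b ≠ 0 := by
    have h := ω.apply_eq_det2_mul b (⟨η 0, hηv 0⟩ : annAt (v 0)) ⟨L 0 1, (hL 0 1 (by decide)).2.1⟩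
    simp only [ω, Submodule.evalDet_apply, (hL 0 1 (by decide)).2.2, mul_zero, sub_zero] at h
    exact right_ne_zero_of_mul (h ▸ mul_ne_zero (hηv_ne 0 1 (by decide)) (hL_ne 0 1 3 (by decide)))
  have hcyc := Dual.cyclic_products_add_eq_zero_of_common_zero (finrank_fin_fun ℝ) (hv 2)
    (hL 0 2 (by decide)).2.2 (hL 1 2 (by decide)).2.2 (hL 2 3 (by decide)).2.1
    (hL 0 2 (by decide)).2.1 (hL 1 2 (by decide)).2.1 (hL 2 3 (by decide)).2.2
  rw [crossRatioIn_eq_of_alternatingMap b ω hωb (⟨η 0, hηv 0⟩ : annAt (v 0))]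
  simp only [ω, Submodule.evalDet_apply, (hL 0 1 (by decide)).2.2, (hL 0 3 (by decide)).2.2,
    mul_zero, zero_mul, sub_zero]
  rw [tripleRatio, div_eq_div_iff
    (mul_ne_zero (mul_ne_zero (hηv_ne 0 1 (by decide)) (hL_ne 0 1 3 (by decide)))
      (mul_ne_zero (hL_ne 0 3 1 (by decide)) (hL_ne 0 2 3 (by decide))))
    (mul_ne_zero (mul_ne_zero (hηv_ne 0 1 (by decide)) (hL_ne 2 3 0 (by decide)))
      (hL_ne 1 2 3 (by decide)))]
  linear_combination -(η 0 (v 3) * η 0 (v 1) * L 0 3 (v 1) * L 0 1 (v 3)) * hcyc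
end

section
/- The cyclic change-of-coordinates map has order four: define α : (ℝ_{>0})⁴ → (ℝ_{>0})⁴ by α(t₀₁₂, t₀₂₃, e₀₂, e₂₀) = (t₁₂₃, t₀₁₃, e₁₃, e₃₁), where t₁₂₃ = t₀₁₂(e₀₂t₀₂₃e₂₀ + e₀₂t₀₂₃ + e₀₂ + 1)/(e₀₂t₀₁₂e₂₀ + t₀₁₂e₂₀ + e₂₀ + 1), t₀₁₃ = t₀₂₃(e₀₂t₀₁₂e₂₀ + t₀₁₂e₂₀ + e₂₀ + 1)/(e₀₂t₀₂₃e₂₀ + e₀₂t₀₂₃ + e₀₂ + 1), e₁₃ = (e₂₀+1)/((e₀₂+1)·t₀₁₂·e₂₀), and e₃₁ = (e₀₂+1)/(e₀₂·t₀₂₃·(e₂₀+1)). Then α maps (ℝ_{>0})⁴ into itself, α∘α equals the swap map (t₀₁₂, t₀₂₃, e₀₂, e₂₀) ↦ (t₀₂₃, t₀₁₂, e₂₀, e₀₂), and consequently α∘α∘α∘α is the identity on (ℝ_{>0})⁴. -/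
/-- The change of Fock–Goncharov coordinates `(t₀₁₂, t₀₂₃, e₀₂, e₂₀)` induced by
cyclically advancing the marking of a marked pair of inscribed quadrilaterals. -/
noncomputable def alphaMap : ℝ × ℝ × ℝ × ℝ → ℝ × ℝ × ℝ × ℝ := fun p =>
  let t012 := p.1; let t023 := p.2.1; let e02 := p.2.2.1; let e20 := p.2.2.2
  (t012 * (e02 * t023 * e20 + e02 * t023 + e02 + 1) /
      (e02 * t012 * e20 + t012 * e20 + e20 + 1),
   t023 * (e02 * t012 * e20 + t012 * e20 + e20 + 1) /
      (e02 * t023 * e20 + e02 * t023 + e02 + 1),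
   (e20 + 1) / ((e02 + 1) * t012 * e20),
   (e02 + 1) / (e02 * t023 * (e20 + 1)))

set_option maxHeartbeats 2000000 in
lemma alphaMap_sq (t012 t023 e02 e20 : ℝ)
    (ht012 : 0 < t012) (ht023 : 0 < t023) (he02 : 0 < e02) (he20 : 0 < e20) :
    alphaMap (alphaMap (t012, t023, e02, e20)) = (t023, t012, e20, e02) := by
  have h1 : e02 * t012 * e20 + t012 * e20 + e20 + 1 ≠ 0 := by positivity
  have h2 : e02 * t023 * e20 + e02 * t023 + e02 + 1 ≠ 0 := by positivity
  simp only [alphaMap]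
  refine Prod.ext ?_ (Prod.ext ?_ (Prod.ext ?_ ?_)) <;>
    · field_simp
      ring

/-- The cyclic change-of-coordinates map `α` preserves positivity, `α ∘ α` is the
swap `(t₀₁₂, t₀₂₃, e₀₂, e₂₀) ↦ (t₀₂₃, t₀₁₂, e₂₀, e₀₂)`, and `α` has order four. -/
theorem alphaMap_order_four
    (t012 t023 e02 e20 : ℝ)
    (ht012 : 0 < t012) (ht023 : 0 < t023) (he02 : 0 < e02) (he20 : 0 < e20) :
    (0 < (alphaMap (t012, t023, e02, e20)).1 ∧
     0 < (alphaMap (t012, t023, e02, e20)).2.1 ∧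
     0 < (alphaMap (t012, t023, e02, e20)).2.2.1 ∧
     0 < (alphaMap (t012, t023, e02, e20)).2.2.2) ∧
    alphaMap (alphaMap (t012, t023, e02, e20)) = (t023, t012, e20, e02) ∧
    alphaMap (alphaMap (alphaMap (alphaMap (t012, t023, e02, e20)))) =
      (t012, t023, e02, e20) := by
  refine ⟨⟨?_, ?_, ?_, ?_⟩, alphaMap_sq _ _ _ _ ht012 ht023 he02 he20, ?_⟩
  · simp only [alphaMap]; positivity
  · simp only [alphaMap]; positivity
  · simp only [alphaMap]; positivity
  · simp only [alphaMap]; positivity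
  · rw [alphaMap_sq _ _ _ _ ht012 ht023 he02 he20,
      alphaMap_sq _ _ _ _ ht023 ht012 he20 he02]
end

section
/- The duality coordinate change is an involution: define δ : (ℝ_{>0})⁴ → (ℝ_{>0})⁴ by δ(t₀₁₂, t₀₂₃, e₀₂, e₂₀) = (1/t₀₁₂, 1/t₀₂₃, e₂₀·t₀₂₃·(t₀₁₂+1)/(t₀₂₃+1), e₀₂·t₀₁₂·(t₀₂₃+1)/(t₀₁₂+1)). Then δ maps (ℝ_{>0})⁴ into itself and δ∘δ is the identity; moreover a point (t₀₁₂, t₀₂₃, e₀₂, e₂₀) is fixed by δ if and only if t₀₁₂ = t₀₂₃ = 1 and e₀₂ = e₂₀. -/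
noncomputable def deltaMap : ℝ × ℝ × ℝ × ℝ → ℝ × ℝ × ℝ × ℝ := fun p =>
  let t012 := p.1; let t023 := p.2.1; let e02 := p.2.2.1; let e20 := p.2.2.2
  (1 / t012, 1 / t023,
   e20 * t023 * (t012 + 1) / (t023 + 1),
   e02 * t012 * (t023 + 1) / (t012 + 1))

/-- The duality coordinate change `δ` preserves positivity, is an involution, and
its fixed points are exactly the points with `t₀₁₂ = t₀₂₃ = 1` and `e₀₂ = e₂₀`. -/
theorem deltaMap_involution
    (t012 t023 e02 e20 : ℝ)
    (ht012 : 0 < t012) (ht023 : 0 < t023) (he02 : 0 < e02) (he20 : 0 < e20) :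
    (0 < (deltaMap (t012, t023, e02, e20)).1 ∧
     0 < (deltaMap (t012, t023, e02, e20)).2.1 ∧
     0 < (deltaMap (t012, t023, e02, e20)).2.2.1 ∧
     0 < (deltaMap (t012, t023, e02, e20)).2.2.2) ∧
    deltaMap (deltaMap (t012, t023, e02, e20)) = (t012, t023, e02, e20) ∧
    (deltaMap (t012, t023, e02, e20) = (t012, t023, e02, e20) ↔
      t012 = 1 ∧ t023 = 1 ∧ e02 = e20) := by
  have h1 : t012 + 1 > 0 := by linarith
  have h2 : t023 + 1 > 0 := by linarith
  have h1' : t012 + 1 ≠ 0 := ne_of_gt h1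
  have h2' : t023 + 1 ≠ 0 := ne_of_gt h2
  have ht12 : t012 ≠ 0 := ne_of_gt ht012
  have ht23 : t023 ≠ 0 := ne_of_gt ht023
  have h3 : (0:ℝ) < 1/t012 + 1 := by positivity
  have h4 : (0:ℝ) < 1/t023 + 1 := by positivity
  refine ⟨⟨?_, ?_, ?_, ?_⟩, ?_, ?_⟩
  · simp only [deltaMap]; positivity
  · simp only [deltaMap]; positivity
  · simp only [deltaMap]; positivity
  · simp only [deltaMap]; positivity
  · simp only [deltaMap, Prod.mk.injEq]
    refine ⟨by field_simp, by field_simp, ?_, ?_⟩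
    · field_simp
      ring
    · field_simp
      ring
  · simp only [deltaMap, Prod.mk.injEq]
    constructor
    · rintro ⟨a, b, c, d⟩
      have ha : t012 = 1 := by
        have := (div_eq_iff ht12).mp a
        nlinarith
      have hb : t023 = 1 := by
        have := (div_eq_iff ht23).mp b
        nlinarith
      subst ha; subst hb
      refine ⟨rfl, rfl, ?_⟩
      rw [div_eq_iff (by norm_num : (1:ℝ)+1 ≠ 0)] at c
      linarith
    · rintro ⟨ha, hb, hc⟩
      subst ha; subst hb; subst hc
      norm_num
end

section
/- Parreau's reparametrization diagonalizes the duality map: for (t₀₁₂, t₀₂₃, e₀₂, e₂₀) ∈ (ℝ_{>0})⁴ define s₀₂ = e₀₂·t₀₁₂/(1+t₀₁₂) and s₂₀ = e₂₀·t₀₂₃/(1+t₀₂₃), and let δ(t₀₁₂, t₀₂₃, e₀₂, e₂₀) = (1/t₀₁₂, 1/t₀₂₃, e₂₀·t₀₂₃·(t₀₁₂+1)/(t₀₂₃+1), e₀₂·t₀₁₂·(t₀₂₃+1)/(t₀₁₂+1)). Then the value of s₀₂ at δ(t₀₁₂, t₀₂₃, e₀₂, e₂₀) equals s₂₀ at (t₀₁₂,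 t₀₂₃, e₀₂, e₂₀), and the value of s₂₀ at δ(t₀₁₂, t₀₂₃, e₀₂, e₂₀) equals s₀₂ at (t₀₁₂, t₀₂₃, e₀₂, e₂₀); i.e., in the coordinates s₀₂, s₂₀ the duality map is the swap s₀₂ ↔ s₂₀. -/
/-- Parreau's reparametrized edge coordinate `s₀₂ = e₀₂ t₀₁₂ / (1 + t₀₁₂)`. -/
noncomputable def s02 : ℝ × ℝ × ℝ × ℝ → ℝ := fun p =>
  p.2.2.1 * p.1 / (1 + p.1)

/-- Parreau's reparametrized edge coordinate `s₂₀ = e₂₀ t₀₂₃ / (1 + t₀₂₃)`. -/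
noncomputable def s20 : ℝ × ℝ × ℝ × ℝ → ℝ := fun p =>
  p.2.2.2 * p.2.1 / (1 + p.2.1)

/-- In Parreau's coordinates `s₀₂, s₂₀` the duality map is the swap `s₀₂ ↔ s₂₀`. -/
theorem parreau_diagonalizes_duality
    (t012 t023 e02 e20 : ℝ)
    (ht012 : 0 < t012) (ht023 : 0 < t023) (he02 : 0 < e02) (he20 : 0 < e20) :
    s02 (deltaMap (t012, t023, e02, e20)) = s20 (t012, t023, e02, e20) ∧
    s20 (deltaMap (t012, t023, e02, e20)) = s02 (t012, t023, e02, e20) := by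
  have h1 : t012 ≠ 0 := ht012.ne'
  have h2 : t023 ≠ 0 := ht023.ne'
  have h3 : (1 : ℝ) + t012 ≠ 0 := by positivity
  have h4 : (1 : ℝ) + t023 ≠ 0 := by positivity
  have h3' : t012 + 1 ≠ 0 := by positivity
  have h4' : t023 + 1 ≠ 0 := by positivity
  have h5 : (1 : ℝ) + 1 / t012 ≠ 0 := by positivity
  have h6 : (1 : ℝ) + 1 / t023 ≠ 0 := by positivity
  constructor <;> simp only [deltaMap, s02, s20] <;> field_simp <;> ring
end

section
/- Eigenvalues of a peripheral monodromy product: let m ≥ 1 and let t_k, x_k, y_k > 0 for k = 1,…,m, and let T(z) = z^{-1/3}·[[0,0,1],[0,-1,-1],[z,z+1,1]] and E(x,y) = (x/y)^{1/3}·[[0,0,y],[0,-1,0],[1/x,0,0]]. Then the product P = ∏_{k=1}^m T(t_k)⁻¹·E(x_k, y_k) is an upper triangular 3×3 matrix whose diagonal entries (hence eigenvalues) are λ₁ = ∏_{k=1}^m (y_k·t_k²·x_k²)^{−1/3}, λ₂ = ∏_{k=1}^m (t_k·x_k/y_k)^{1/3}, and λ₃ = ∏_{k=1}^m (y_k²·t_k·x_k)^{1/3}.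 -/
open scoped BigOperators

/-- The elementary triangle monodromy matrix `T(z)`. -/
noncomputable def Tmat (z : ℝ) : Matrix (Fin 3) (Fin 3) ℝ :=
  (z ^ (-(1 / 3 : ℝ))) • !![0, 0, 1; 0, -1, -1; z, z + 1, 1]

/-- The elementary edge monodromy matrix `E(x,y)`. -/
noncomputable def Emat (x y : ℝ) : Matrix (Fin 3) (Fin 3) ℝ :=
  ((x / y) ^ ((1 : ℝ) / 3)) • !![0, 0, y; 0, -1, 0; 1 / x, 0, 0]

/-- The ordered product `∏_{k=1}^m T(t_k)⁻¹ E(x_k, y_k)` representing a peripheral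
holonomy in the Fock–Goncharov parametrization. -/
noncomputable def periph {m : ℕ} (t x y : Fin m → ℝ) : Matrix (Fin 3) (Fin 3) ℝ :=
  (List.ofFn fun k : Fin m => (Tmat (t k))⁻¹ * Emat (x k) (y k)).prod

/-!
Each factor `T(z)⁻¹ E(x, y)` equals `(z x / y)^{1/3}` times the upper triangular matrix
`[[1/(z x), -(z+1)/z, y], [0, 1, -y], [0, 0, y]]`. Upper triangular matrices are closed under
products, and the diagonal of such a product is the entrywise product of the diagonals. The
diagonal entries `(z x / y)^{1/3} · (1/(z x), 1, y)` of a factor are matched with the stated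
cube roots by comparing cubes.
-/

namespace Matrix

variable {m R : Type*} [Fintype m] [LinearOrder m]

theorem IsUpperTriangular.mul_apply_self [NonUnitalNonAssocSemiring R] {M N : Matrix m m R}
    (hM : M.IsUpperTriangular) (hN : N.IsUpperTriangular) (i : m) :
    (M * N) i i = M i i * N i i := by
  rw [mul_apply]
  refine Finset.sum_eq_single i (fun j _ hji => ?_) (by simp)
  rcases hji.lt_or_gt with hlt | hlt
  · rw [hM hlt, zero_mul]
  · rw [hN hlt, mul_zero]

variable [DecidableEq m] [Semiring R]

theorem IsUpperTriangular.list_prod {l : List (Matrix m m R)}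
    (hl : ∀ M ∈ l, M.IsUpperTriangular) : l.prod.IsUpperTriangular :=
  mem_blockTriangularSubsemiring.mp <| Subsemiring.list_prod_mem _ fun M hM =>
    mem_blockTriangularSubsemiring.mpr (hl M hM)

theorem IsUpperTriangular.list_prod_apply_self {l : List (Matrix m m R)}
    (hl : ∀ M ∈ l, M.IsUpperTriangular) (i : m) :
    l.prod i i = (l.map fun M => M i i).prod := by
  induction l with
  | nil => simp
  | cons M l ih =>
    have hM := hl M List.mem_cons_self
    have hl' := fun N hN => hl N (List.mem_cons_of_mem M hN)
    rw [List.prod_cons, hM.mul_apply_self (IsUpperTriangular.list_prod hl'), ih hl']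
    rfl

end Matrix

theorem Real.eq_rpow_one_third_of_pow_three {a b : ℝ} (ha : 0 ≤ a) (h : a ^ 3 = b) :
    a = b ^ ((1 : ℝ) / 3) := by
  rw [← h, one_div]
  exact_mod_cast (Real.pow_rpow_inv_natCast ha three_ne_zero).symm

theorem Real.rpow_one_third_pow_three {a : ℝ} (ha : 0 ≤ a) : (a ^ ((1 : ℝ) / 3)) ^ 3 = a := by
  rw [one_div]
  exact_mod_cast Real.rpow_inv_natCast_pow ha three_ne_zero

section Monodromy

variable {z x y : ℝ}

theorem Tmat_inv (hz : 0 < z) :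
    (Tmat z)⁻¹ = z ^ ((1 : ℝ) / 3) • !![1, (z + 1) / z, 1 / z; -1, -1, 0; 1, 0, 0] := by
  apply Matrix.inv_eq_right_inv
  rw [Tmat, Matrix.smul_mul, Matrix.mul_smul, smul_smul, ← Real.rpow_add hz, neg_add_cancel,
    Real.rpow_zero, one_smul]
  ext i j
  fin_cases i <;> fin_cases j <;> simp [Matrix.mul_apply, Fin.sum_univ_three] <;> field_simp
  ring

theorem Tmat_inv_mul_Emat (hz : 0 < z) (hx : 0 < x) (hy : 0 < y) :
    (Tmat z)⁻¹ * Emat x y =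
      (z * x / y) ^ ((1 : ℝ) / 3) • !![1 / (z * x), -(z + 1) / z, y; 0, 1, -y; 0, 0, y] := by
  rw [Tmat_inv hz, Emat, Matrix.smul_mul, Matrix.mul_smul, smul_smul, mul_div_assoc,
    Real.mul_rpow hz.le (div_pos hx hy).le]
  congr 1
  ext i j
  fin_cases i <;> fin_cases j <;> simp [Matrix.mul_apply, Fin.sum_univ_three] <;> field_simp
  ring

theorem Tmat_inv_mul_Emat_isUpperTriangular (hz : 0 < z) (hx : 0 < x) (hy : 0 < y) :
    ((Tmat z)⁻¹ * Emat x y).IsUpperTriangular := by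
  rw [Tmat_inv_mul_Emat hz hx hy]
  intro i j hji
  fin_cases i <;> fin_cases j <;> simp_all

theorem Tmat_inv_mul_Emat_apply_zero_zero (hz : 0 < z) (hx : 0 < x) (hy : 0 < y) :
    ((Tmat z)⁻¹ * Emat x y) 0 0 = (y * z ^ 2 * x ^ 2) ^ (-(1 / 3 : ℝ)) := by
  have hb : 0 ≤ y * z ^ 2 * x ^ 2 := by positivity
  rw [Tmat_inv_mul_Emat hz hx hy, Real.rpow_neg hb, ← Real.inv_rpow hb]
  simp only [Matrix.smul_apply, Matrix.of_apply, Matrix.cons_val', Matrix.cons_val_zero,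
    Matrix.empty_val', Matrix.cons_val_fin_one, smul_eq_mul]
  refine Real.eq_rpow_one_third_of_pow_three (by positivity) ?_
  rw [mul_pow, Real.rpow_one_third_pow_three (by positivity)]
  field_simp

theorem Tmat_inv_mul_Emat_apply_one_one (hz : 0 < z) (hx : 0 < x) (hy : 0 < y) :
    ((Tmat z)⁻¹ * Emat x y) 1 1 = (z * x / y) ^ ((1 : ℝ) / 3) := by
  simp [Tmat_inv_mul_Emat hz hx hy]

theorem Tmat_inv_mul_Emat_apply_two_two (hz : 0 < z) (hx : 0 < x) (hy : 0 < y) :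
    ((Tmat z)⁻¹ * Emat x y) 2 2 = (y ^ 2 * z * x) ^ ((1 : ℝ) / 3) := by
  simp only [Tmat_inv_mul_Emat hz hx hy, Matrix.smul_apply, Matrix.of_apply, Matrix.cons_val',
    Matrix.empty_val', Matrix.cons_val_fin_one, Matrix.cons_val_two, Matrix.tail_cons,
    Matrix.vecHead, smul_eq_mul]
  refine Real.eq_rpow_one_third_of_pow_three (by positivity) ?_
  rw [mul_pow, Real.rpow_one_third_pow_three (by positivity)]
  field_simp

end Monodromy

theorem periph_upper_triangular_eigenvalues_general
    (m : ℕ) (t x y : Fin m → ℝ)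
    (ht : ∀ k, 0 < t k) (hx : ∀ k, 0 < x k) (hy : ∀ k, 0 < y k) :
    (periph t x y).BlockTriangular (id : Fin 3 → Fin 3) ∧
    periph t x y 0 0 = ∏ k, (y k * t k ^ 2 * x k ^ 2) ^ (-(1 / 3 : ℝ)) ∧
    periph t x y 1 1 = ∏ k, (t k * x k / y k) ^ ((1 : ℝ) / 3) ∧
    periph t x y 2 2 = ∏ k, (y k ^ 2 * t k * x k) ^ ((1 : ℝ) / 3) := by
  have htri : ∀ M ∈ List.ofFn fun k => (Tmat (t k))⁻¹ * Emat (x k) (y k),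
      M.IsUpperTriangular := by
    simp only [List.forall_mem_ofFn_iff]
    exact fun k => Tmat_inv_mul_Emat_isUpperTriangular (ht k) (hx k) (hy k)
  have hdiag (i : Fin 3) :
      periph t x y i i = ∏ k, ((Tmat (t k))⁻¹ * Emat (x k) (y k)) i i := by
    rw [periph, Matrix.IsUpperTriangular.list_prod_apply_self htri, List.map_ofFn,
      List.prod_ofFn]
    rfl
  refine ⟨Matrix.IsUpperTriangular.list_prod htri, ?_, ?_, ?_⟩ <;> rw [hdiag] <;>
    refine Finset.prod_congr rfl fun k _ => ?_
  · exact Tmat_inv_mul_Emat_apply_zero_zero (ht k) (hx k) (hy k)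
  · exact Tmat_inv_mul_Emat_apply_one_one (ht k) (hx k) (hy k)
  · exact Tmat_inv_mul_Emat_apply_two_two (ht k) (hx k) (hy k)

/-- The peripheral monodromy product is upper triangular, with diagonal entries
(hence eigenvalues) `λ₁ = ∏ (y_k t_k² x_k²)^{-1/3}`, `λ₂ = ∏ (t_k x_k / y_k)^{1/3}`,
`λ₃ = ∏ (y_k² t_k x_k)^{1/3}`. -/
theorem periph_upper_triangular_eigenvalues
    (m : ℕ) (hm : 1 ≤ m) (t x y : Fin m → ℝ)
    (ht : ∀ k, 0 < t k) (hx : ∀ k, 0 < x k) (hy : ∀ k, 0 < y k) :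
    (periph t x y).BlockTriangular (id : Fin 3 → Fin 3) ∧
    periph t x y 0 0 = ∏ k, (y k * t k ^ 2 * x k ^ 2) ^ (-(1 / 3 : ℝ)) ∧
    periph t x y 1 1 = ∏ k, (t k * x k / y k) ^ ((1 : ℝ) / 3) ∧
    periph t x y 2 2 = ∏ k, (y k ^ 2 * t k * x k) ^ ((1 : ℝ) / 3) :=
  periph_upper_triangular_eigenvalues_general m t x y ht hx hy
end

section
/- Tangency of the inscribed conic is detected by the triple ratio: let ((v₀,η₀), (v₁,η₁), (v₂,η₂)) be a triple of flags in general position and let q be a quadratic form on ℝ³ with polar symmetric bilinear form B such that q(v₀) = q(v₁) = q(v₂) = 0, the linear functional B(v₀,·) is a nonzero scalar multiple of η₀, and B(v₁,·) is a nonzero scalar multiple of η₁. Then B(v₂,·) is a scalar multiple of η₂ if and only if the triple ratio 𝕋((v₀,η₀),(v₁,η₁),(v₂,η₂)) equals 1. -/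
/-- Tangency of an inscribed conic is detected by the triple ratio: for a triple of
flags in general position and a conic (quadratic form `q` with polar form `B`)
through the three points, tangent to `η₀` at `v₀` and to `η₁` at `v₁`, the conic is
tangent to `η₂` at `v₂` iff the triple ratio equals `1`. -/
theorem conic_tangency_iff_tripleRatio_eq_one
    (v₀ v₁ v₂ : Fin 3 → ℝ) (η₀ η₁ η₂ : (Fin 3 → ℝ) →ₗ[ℝ] ℝ)
    (hv₀ : v₀ ≠ 0) (hv₁ : v₁ ≠ 0) (hv₂ : v₂ ≠ 0)
    (hη₀ : η₀ ≠ 0) (hη₁ : η₁ ≠ 0) (hη₂ : η₂ ≠ 0)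
    (h₀ : η₀ v₀ = 0) (h₁ : η₁ v₁ = 0) (h₂ : η₂ v₂ = 0)
    (hv : LinearIndependent ℝ ![v₀, v₁, v₂])
    (hη : LinearIndependent ℝ ![η₀, η₁, η₂])
    (h01 : η₀ v₁ ≠ 0) (h02 : η₀ v₂ ≠ 0) (h10 : η₁ v₀ ≠ 0)
    (h12 : η₁ v₂ ≠ 0) (h20 : η₂ v₀ ≠ 0) (h21 : η₂ v₁ ≠ 0)
    (q : QuadraticForm ℝ (Fin 3 → ℝ))
    (hq₀ : q v₀ = 0) (hq₁ : q v₁ = 0) (hq₂ : q v₂ = 0)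
    (hB₀ : ∃ c : ℝ, c ≠ 0 ∧ q.polarBilin v₀ = c • η₀)
    (hB₁ : ∃ c : ℝ, c ≠ 0 ∧ q.polarBilin v₁ = c • η₁) :
    (∃ c : ℝ, q.polarBilin v₂ = c • η₂) ↔
      tripleRatio v₀ v₁ v₂ η₀ η₁ η₂ = 1 := by
  obtain ⟨c₀, hc₀, hB0⟩ := hB₀
  obtain ⟨c₁, hc₁, hB1⟩ := hB₁
  have hsymm : ∀ x y, q.polarBilin x y = q.polarBilin y x := fun x y =>
    QuadraticMap.polar_comm q x y
  have e3 : c₀ * η₀ v₁ = c₁ * η₁ v₀ := by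
    have h := hsymm v₀ v₁
    rw [hB0, hB1] at h
    simpa using h
  have hself : q.polarBilin v₂ v₂ = 0 := by
    simp [QuadraticMap.polarBilin, QuadraticMap.polar_self, hq₂]
  have h20' : q.polarBilin v₂ v₀ = c₀ * η₀ v₂ := by
    rw [hsymm, hB0]; simp
  have h21' : q.polarBilin v₂ v₁ = c₁ * η₁ v₂ := by
    rw [hsymm, hB1]; simp
  constructor
  · rintro ⟨c, hc⟩
    have e1 : c * η₂ v₀ = c₀ * η₀ v₂ := by rw [← h20', hc]; simp
    have e2 : c * η₂ v₁ = c₁ * η₁ v₂ := by rw [← h21', hc]; simp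
    have hcne : c ≠ 0 := by
      intro h
      rw [h, zero_mul] at e1
      exact (mul_ne_zero hc₀ h02) e1.symm
    unfold tripleRatio
    rw [div_eq_one_iff_eq (mul_ne_zero (mul_ne_zero h02 h10) h21)]
    have key : (η₀ v₁ * η₁ v₂ * η₂ v₀) * (c₀ * c₁ * c) =
        (η₀ v₂ * η₁ v₀ * η₂ v₁) * (c₀ * c₁ * c) := by
      linear_combination (c₁ * c * η₁ v₂ * η₂ v₀) * e3 + (c₁ * c * η₁ v₀ * η₂ v₁) * e1
        - (c₁ * c * η₁ v₀ * η₂ v₀) * e2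
    exact mul_right_cancel₀ (mul_ne_zero (mul_ne_zero hc₀ hc₁) hcne) key
  · intro hT
    have hTeq : η₀ v₁ * η₁ v₂ * η₂ v₀ = η₀ v₂ * η₁ v₀ * η₂ v₁ := by
      unfold tripleRatio at hT
      field_simp at hT
      linarith
    refine ⟨c₀ * η₀ v₂ / η₂ v₀, ?_⟩
    have hcard : Fintype.card (Fin 3) = Module.finrank ℝ (Fin 3 → ℝ) := by simp
    let b := basisOfLinearIndependentOfCardEqFinrank hv hcard
    apply b.ext
    intro i
    have hb : b i = ![v₀, v₁, v₂] i := by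
      simp [b, coe_basisOfLinearIndependentOfCardEqFinrank]
    rw [hb]
    fin_cases i
    · show (QuadraticMap.polarBilin q) v₂ v₀ = (c₀ * η₀ v₂ / η₂ v₀) * η₂ v₀
      rw [h20']
      field_simp
    · show (QuadraticMap.polarBilin q) v₂ v₁ = (c₀ * η₀ v₂ / η₂ v₀) * η₂ v₁
      rw [h21']
      field_simp
      exact mul_left_cancel₀ h10 (by linear_combination c₀ * hTeq - (η₁ v₂ * η₂ v₀) * e3)
    · show (QuadraticMap.polarBilin q) v₂ v₂ = (c₀ * η₀ v₂ / η₂ v₀) * η₂ v₂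
      rw [hself, h₂, mul_zero]
end
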